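/- arXiv:1702.04067 — 2 statements merged into one kernel-verified Lean document; each statement's English description precedes it below -/
import Mathlib

section
/- Let g' be a k-goal function (k∈{0,1}) for a Boolean function f, and suppose f has a minimal k-certificate of size s. Then the k-goal value of g' is at least s. -/
attribute [local instance] Classical.propDecidable

/-- `b'` extends the partial assignment `b`: it agrees on all non-`*` coordinates of `b`. -/
def Extends {n : ℕ} (b' b : Fin n → Option Bool) : Prop :=
  ∀ i v, b i = some v → b' i = some v

/-- A total assignment `x` extends the partial assignment `b`. -/
def TExtends {n : ℕ} (x : Fin n → Bool) (b : Fin n → Option Bool) : Prop :=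
  ∀ i v, b i = some v → x i = v

/-- `b` is a certificate of `f`: `f` is constant on all total extensions of `b`. -/
def IsCert {n : ℕ} (f : (Fin n → Bool) → Bool) (b : Fin n → Option Bool) : Prop :=
  ∀ x y, TExtends x b → TExtends y b → f x = f y

/-- `b` is a `k`-certificate of `f`: it forces `f` to the value `k`. -/
def IsKCert {n : ℕ} (f : (Fin n → Bool) → Bool) (k : Bool) (b : Fin n → Option Bool) : Prop :=
  ∀ x, TExtends x b → f x = k

/-- A certificate is minimal if no proper restriction of it is a certificate. -/
def MinCert {n : ℕ} (f : (Fin n → Bool) → Bool) (c : Fin n → Option Bool) : Prop :=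
  IsCert f c ∧ ∀ c', Extends c c' → c' ≠ c → ¬ IsCert f c'

/-- A `k`-certificate is minimal if no proper restriction of it is a `k`-certificate. -/
def MinKCert {n : ℕ} (f : (Fin n → Bool) → Bool) (k : Bool) (c : Fin n → Option Bool) : Prop :=
  IsKCert f k c ∧ ∀ c', Extends c c' → c' ≠ c → ¬ IsKCert f k c'

/-- Monotone utility function: filling in `*`'s never decreases the value. -/
def Mono {n : ℕ} (g : (Fin n → Option Bool) → ℕ) : Prop :=
  ∀ b b', Extends b' b → g b ≤ g b'

/-- Submodular utility function: marginal gains shrink under extension. -/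
def Submod {n : ℕ} (g : (Fin n → Option Bool) → ℕ) : Prop :=
  ∀ b b' (i : Fin n) (ℓ : Bool), Extends b' b → b i = none → b' i = none →
    g (Function.update b' i (some ℓ)) + g b ≤ g (Function.update b i (some ℓ)) + g b'

/-- `g` is a goal function for `f` with goal value `Q`. -/
def GoalFn {n : ℕ} (f : (Fin n → Bool) → Bool) (g : (Fin n → Option Bool) → ℕ)
    (Q : ℕ) : Prop :=
  Mono g ∧ Submod g ∧ ∀ b, g b = Q ↔ IsCert f b

/-- `g` is a `k`-goal function for `f` with goal value `Q`. -/
def KGoalFn {n : ℕ} (f : (Fin n → Bool) → Bool) (k : Bool)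
    (g : (Fin n → Option Bool) → ℕ) (Q : ℕ) : Prop :=
  Mono g ∧ Submod g ∧ (∀ b, IsKCert f k b → g b = Q) ∧ (∀ b, ¬ IsKCert f k b → g b < Q)

/-- The goal value `Γ(f)`: the minimum goal value of any goal function for `f`. -/
noncomputable def gamma {n : ℕ} (f : (Fin n → Bool) → Bool) : ℕ :=
  sInf {Q | ∃ g, GoalFn f g Q}

/-- The `k`-goal value `Γ^k(f)`. -/
noncomputable def gammaK {n : ℕ} (f : (Fin n → Bool) → Bool) (k : Bool) : ℕ :=
  sInf {Q | ∃ g, KGoalFn f k g Q}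

/-- The weight of a partial assignment: the number of non-`*` coordinates. -/
noncomputable def wt {n : ℕ} (b : Fin n → Option Bool) : ℕ :=
  (Finset.univ.filter (fun i => (b i).isSome)).card

/-- `f` depends on its `i`-th variable. -/
def BoolDependsOn {n : ℕ} (f : (Fin n → Bool) → Bool) (i : Fin n) : Prop :=
  ∃ x, f (Function.update x i true) ≠ f (Function.update x i false)

/-!
Let `S` be the set of variables fixed by a minimal `k`-certificate `c`. Unfixing any `a ∈ S`
destroys the certificate, so `g'` drops strictly below `Q = g' c`: the marginal gain of `a` on
top of `c` with `a` unfixed is at least one. By submodularity the gain of `a` is at least as large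
on top of any restriction of `c` to a subset of `S ∖ {a}`, so fixing the variables of `S` one by one,
starting from the empty assignment, raises `g'` by at least one per step, whence `|S| ≤ g' c = Q`.
-/

section PartialAssignment

variable {n : ℕ}

def restrictTo (c : Fin n → Option Bool) (T : Finset (Fin n)) : Fin n → Option Bool :=
  fun i => if i ∈ T then c i else none

def assignedVars (c : Fin n → Option Bool) : Finset (Fin n) :=
  Finset.univ.filter fun i => (c i).isSome

lemma wt_eq_card_assignedVars (c : Fin n → Option Bool) : wt c = (assignedVars c).card := rfl

lemma restrictTo_assignedVars (c : Fin n → Option Bool) : restrictTo c (assignedVars c) = c := by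
  funext i
  cases hi : c i <;> simp [restrictTo, assignedVars, hi]

lemma restrictTo_of_notMem {c : Fin n → Option Bool} {T : Finset (Fin n)} {a : Fin n}
    (ha : a ∉ T) : restrictTo c T a = none := by
  simp [restrictTo, ha]

lemma update_restrictTo (c : Fin n → Option Bool) (T : Finset (Fin n)) (a : Fin n) :
    Function.update (restrictTo c T) a (c a) = restrictTo c (insert a T) := by
  funext i
  by_cases hia : i = a
  · subst hia; simp [restrictTo]
  · simp [restrictTo, hia]

lemma extends_update_none (c : Fin n → Option Bool) (a : Fin n) :
    Extends c (Function.update c a none) := by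
  intro i v hiv
  by_cases hia : i = a
  · subst hia; simp at hiv
  · simpa [hia] using hiv

lemma update_none_extends_restrictTo {c : Fin n → Option Bool} {T : Finset (Fin n)} {a : Fin n}
    (ha : a ∉ T) : Extends (Function.update c a none) (restrictTo c T) := by
  intro i v hiv
  by_cases hiT : i ∈ T
  · have hia : i ≠ a := fun h => ha (h ▸ hiT)
    simpa [restrictTo, hiT, hia] using hiv
  · simp [restrictTo, hiT] at hiv

lemma update_none_ne_self {c : Fin n → Option Bool} {a : Fin n} (ha : a ∈ assignedVars c) :
    Function.update c a none ≠ c := by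
  intro h
  have hca := congrFun h a
  rw [Function.update_self] at hca
  simp [assignedVars, ← hca] at ha

end PartialAssignment

lemma Submod.card_le_restrictTo {n : ℕ} {g : (Fin n → Option Bool) → ℕ} (hg : Submod g)
    {c : Fin n → Option Bool}
    (hgain : ∀ a ∈ assignedVars c, g (Function.update c a none) < g c) :
    ∀ T ⊆ assignedVars c, T.card ≤ g (restrictTo c T) := by
  intro T
  induction T using Finset.induction_on with
  | empty => simp
  | @insert a T haT ih =>
    intro hT
    have haS : a ∈ assignedVars c := hT (Finset.mem_insert_self a T)
    obtain ⟨ℓ, hℓ⟩ := Option.isSome_iff_exists.mp (Finset.mem_filter.mp haS).2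
    have hsub := hg (restrictTo c T) (Function.update c a none) a ℓ
      (update_none_extends_restrictTo haT) (restrictTo_of_notMem haT) (Function.update_self ..)
    rw [Function.update_idem, ← hℓ, Function.update_eq_self, update_restrictTo] at hsub
    have := ih fun i hi => hT (Finset.mem_insert_of_mem hi)
    have := hgain a haS
    rw [Finset.card_insert_of_notMem haT]
    omega

lemma Submod.wt_le {n : ℕ} {g : (Fin n → Option Bool) → ℕ} (hg : Submod g)
    {c : Fin n → Option Bool}
    (hgain : ∀ a ∈ assignedVars c, g (Function.update c a none) < g c) :
    wt c ≤ g c := by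
  simpa [wt_eq_card_assignedVars, restrictTo_assignedVars] using
    hg.card_le_restrictTo hgain _ subset_rfl

lemma MinKCert.erase_lt {n : ℕ} {f : (Fin n → Bool) → Bool} {k : Bool}
    {g : (Fin n → Option Bool) → ℕ} {Q : ℕ} {c : Fin n → Option Bool} (hc : MinKCert f k c)
    (hg : KGoalFn f k g Q) {a : Fin n} (ha : a ∈ assignedVars c) :
    g (Function.update c a none) < g c :=
  (hg.2.2.2 _ (hc.2 _ (extends_update_none c a) (update_none_ne_self ha))).trans_eq
    (hg.2.2.1 c hc.1).symm

/-- if `f` has a minimal `k`-certificate of size `s`, then the goal value of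
any `k`-goal function for `f` is at least `s`. -/
theorem stmt3 {n : ℕ} (f : (Fin n → Bool) → Bool) (k : Bool)
    (g' : (Fin n → Option Bool) → ℕ) (Q : ℕ) (hg : KGoalFn f k g' Q)
    (c : Fin n → Option Bool) (hc : MinKCert f k c) (s : ℕ) (hs : wt c = s) :
    s ≤ Q :=
  hs ▸ (hg.2.1.wt_le fun _ ha => hc.erase_lt hg ha).trans_eq (hg.2.2.1 c hc.1)
end

section
/- If a Boolean function f:{0,1}^n→{0,1} depends on exactly n' of its input variables, then Γ(f) ≥ n'. -/
attribute [local instance] Classical.propDecidable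

/-- `f` depends on its `i`-th variable. -/
def DependsOnVar {n : ℕ} (f : (Fin n → Bool) → Bool) (i : Fin n) : Prop :=
  ∃ x, f (Function.update x i true) ≠ f (Function.update x i false)

/-!
Fix a goal function `g` with goal value `Q = Γ(f)` (one exists: count the pairs of inputs with
different `f`-values that are not both consistent with `b`). If the coordinate `i` is free in `b`
and `f` restricted by `b` still depends on it, take a consistent input `x` sensitive at `i` and
free its coordinate `i`: the result `c` is no certificate while `c[i := v]` is a total input, so
submodularity between `b ⊆ c` gives `g b < g (b[i := v])`. A combinatorial lemma lets us set
one such relevant coordinate so that all other relevant coordinates stay relevant; iterating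
from the empty assignment climbs `n'` times, hence `n' ≤ Q`.
-/

open Function Finset

section

variable {n : ℕ} {f : (Fin n → Bool) → Bool}

lemma TExtends.of_extends {x : Fin n → Bool} {b b' : Fin n → Option Bool}
    (hx : TExtends x b') (hb : Extends b' b) : TExtends x b :=
  fun i v hiv => hx i v (hb i v hiv)

lemma tExtends_update_some {x : Fin n → Bool} {b : Fin n → Option Bool} {i : Fin n}
    (hbi : b i = none) (ℓ : Bool) :
    TExtends x (update b i (some ℓ)) ↔ TExtends x b ∧ x i = ℓ := by
  constructor
  · intro hx
    refine ⟨fun k w hk => hx k w ?_, hx i ℓ (update_self ..)⟩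
    rwa [update_of_ne (by rintro rfl; simp [hbi] at hk)]
  · rintro ⟨hx, hxi⟩ k w hk
    by_cases hki : k = i
    · subst hki; simp_all
    · exact hx k w (by rwa [update_of_ne hki] at hk)

lemma TExtends.update {x : Fin n → Bool} {b : Fin n → Option Bool} {i : Fin n}
    (hx : TExtends x b) (hbi : b i = none) (t : Bool) : TExtends (update x i t) b := by
  intro k w hk
  rw [update_of_ne (by rintro rfl; simp [hbi] at hk)]
  exact hx k w hk

lemma extends_some_iff {x : Fin n → Bool} {b : Fin n → Option Bool} :
    Extends (fun k => some (x k)) b ↔ TExtends x b := by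
  simp [Extends, TExtends]

lemma isCert_some (x : Fin n → Bool) : IsCert f (fun k => some (x k)) := by
  have hx : ∀ y, TExtends y (fun k => some (x k)) → y = x := fun y hy =>
    funext fun k => hy k (x k) rfl
  intro y z hy hz
  rw [hx y hy, hx z hz]

lemma tExtends_update_update_none (x : Fin n → Bool) (i : Fin n) (t : Bool) :
    TExtends (update x i t) (update (fun k => some (x k)) i none) := by
  intro k w hk
  have hki : k ≠ i := by rintro rfl; simp at hk
  simp_all

noncomputable def disagreeingPairs (f : (Fin n → Bool) → Bool) :
    Finset ((Fin n → Bool) × (Fin n → Bool)) :=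
  univ.filter fun p => f p.1 ≠ f p.2

noncomputable def pairGoal (f : (Fin n → Bool) → Bool) (b : Fin n → Option Bool) : ℕ :=
  #((disagreeingPairs f).filter fun p => ¬(TExtends p.1 b ∧ TExtends p.2 b))

lemma pairGoal_goalFn (f : (Fin n → Bool) → Bool) :
    GoalFn f (pairGoal f) #(disagreeingPairs f) := by
  refine ⟨fun b b' hb => ?_, fun b b' i ℓ hb hbi hb'i => ?_, fun b => ?_⟩
  · refine card_le_card (monotone_filter_right _ fun p _ hp hp' => hp ?_)
    exact ⟨hp'.1.of_extends hb, hp'.2.of_extends hb⟩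
  · simp only [pairGoal, card_filter, ← sum_add_distrib, tExtends_update_some hbi,
      tExtends_update_some hb'i]
    refine sum_le_sum fun p _ => ?_
    have hmono : TExtends p.1 b' ∧ TExtends p.2 b' → TExtends p.1 b ∧ TExtends p.2 b :=
      fun h => ⟨h.1.of_extends hb, h.2.of_extends hb⟩
    split_ifs <;> simp_all
  · rw [pairGoal, card_filter_eq_iff]
    simp only [disagreeingPairs, mem_filter, mem_univ, true_and, not_and, IsCert]
    exact ⟨fun h x y hx hy => by_contra fun hxy => h (x, y) hxy hx hy,
      fun h p hp hx hy => hp (h _ _ hx hy)⟩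

namespace GoalFn

variable {g : (Fin n → Option Bool) → ℕ} {Q : ℕ}

lemma le_goal (hg : GoalFn f g Q) (b : Fin n → Option Bool) : g b ≤ Q := by
  have hb : TExtends (fun k => (b k).getD false) b := fun k w hk => by simp [hk]
  calc g b ≤ g fun k => some ((b k).getD false) := hg.1 _ _ (extends_some_iff.2 hb)
    _ = Q := (hg.2.2 _).2 (isCert_some _)

lemma lt_goal (hg : GoalFn f g Q) {b : Fin n → Option Bool} (hb : ¬IsCert f b) : g b < Q :=
  (hg.le_goal b).lt_of_ne fun h => hb ((hg.2.2 b).1 h)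

end GoalFn

def SensitiveAt (f : (Fin n → Bool) → Bool) (x : Fin n → Bool) (i : Fin n) : Prop :=
  f (update x i true) ≠ f (update x i false)

def RelevantAt (f : (Fin n → Bool) → Bool) (b : Fin n → Option Bool) (i : Fin n) : Prop :=
  ∃ x, TExtends x b ∧ SensitiveAt f x i

noncomputable def freeRelevant (f : (Fin n → Bool) → Bool) (b : Fin n → Option Bool) :
    Finset (Fin n) :=
  univ.filter fun i => b i = none ∧ RelevantAt f b i

lemma mem_freeRelevant {b : Fin n → Option Bool} {i : Fin n} :
    i ∈ freeRelevant f b ↔ b i = none ∧ RelevantAt f b i := by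
  simp [freeRelevant]

lemma GoalFn.lt_update {g : (Fin n → Option Bool) → ℕ} {Q : ℕ} (hg : GoalFn f g Q)
    {b : Fin n → Option Bool} {i : Fin n} (hbi : b i = none) (hi : RelevantAt f b i)
    (v : Bool) : g b < g (update b i (some v)) := by
  obtain ⟨x, hxb, hxi⟩ := hi
  -- `c` is `x` with coordinate `i` freed: not a certificate, but one after setting `i`.
  set c := update (fun k => some (x k)) i none
  have hcb : Extends c b := by
    intro k w hk
    have hki : k ≠ i := by rintro rfl; simp [hbi] at hk
    simp [c, update_of_ne hki, hxb k w hk]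
  have hc : ¬IsCert f c := fun h =>
    hxi (h _ _ (tExtends_update_update_none x i true) (tExtends_update_update_none x i false))
  have hcv : update c i (some v) = fun k => some (update x i v k) := by
    funext k
    rcases eq_or_ne k i with rfl | hki <;> simp [c, update_of_ne, *]
  have hsub := hg.2.1 b c i v hcb hbi (update_self ..)
  rw [hcv, (hg.2.2 _).2 (isCert_some _)] at hsub
  have := hg.lt_goal hc
  omega

lemma eq_of_not_sensitiveAt {x : Fin n → Bool} {i : Fin n} (h : ¬SensitiveAt f x i)
    (u u' : Bool) : f (update x i u) = f (update x i u') := by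
  unfold SensitiveAt at h
  cases u <;> cases u' <;> simp_all

lemma exists_sensitiveAt_update_of_fixed {b : Fin n → Option Bool} {i j : Fin n} {c : Bool}
    (hbi : b i = none) (hij : i ≠ j)
    (hfix : ∀ x, TExtends x b → SensitiveAt f x j → x i = c)
    {x : Fin n → Bool} (hxb : TExtends x b) (hxj : SensitiveAt f x j) :
    ∃ t, SensitiveAt f (update x j t) i := by
  by_contra! hno
  have hz : ¬SensitiveAt f (update x i (!c)) j := fun h => by
    simpa using hfix _ (hxb.update hbi _) h
  have hflip : ∀ t, f (update x j t) = f (update (update x i (!c)) j t) := fun t =>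
    calc f (update x j t) = f (update (update x j t) i (update x j t i)) := by rw [update_eq_self]
      _ = f (update (update x i (!c)) j t) := by
        rw [update_comm hij, eq_of_not_sensitiveAt (hno t)]
  exact hxj (by rw [hflip, hflip]; exact not_not.1 hz)

noncomputable def fixedLits (f : (Fin n → Bool) → Bool) (b : Fin n → Option Bool)
    (j : Fin n) : Finset (Fin n × Bool) :=
  univ.filter fun p => p.1 ≠ j ∧ ∀ x, TExtends x b → SensitiveAt f x j → x p.1 = p.2

section fixedLits

variable {b : Fin n → Option Bool} {i j k : Fin n} {c d : Bool}

lemma mem_fixedLits : (k, d) ∈ fixedLits f b j ↔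
    k ≠ j ∧ ∀ x, TExtends x b → SensitiveAt f x j → x k = d := by
  simp [fixedLits]

lemma mem_fixedLits_of_fixed (hbi : b i = none) (hbj : b j = none) (hij : i ≠ j)
    (hfix : ∀ x, TExtends x b → SensitiveAt f x j → x i = c)
    (hk : (k, d) ∈ fixedLits f b i) (hkj : k ≠ j) : (k, d) ∈ fixedLits f b j := by
  refine mem_fixedLits.2 ⟨hkj, fun x hxb hxj => ?_⟩
  obtain ⟨t, hxi⟩ := exists_sensitiveAt_update_of_fixed hbi hij hfix hxb hxj
  simpa [update_of_ne hkj] using (mem_fixedLits.1 hk).2 _ (hxb.update hbj t) hxi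

lemma exists_mem_fixedLits_of_card_le (hbi : b i = none) (hbj : b j = none) (hij : i ≠ j)
    (hfix : ∀ x, TExtends x b → SensitiveAt f x j → x i = c)
    (hcard : #(fixedLits f b j) ≤ #(fixedLits f b i)) : ∃ d, (j, d) ∈ fixedLits f b i := by
  by_contra! hno
  have hsub : insert (i, c) (fixedLits f b i) ⊆ fixedLits f b j :=
    insert_subset (mem_fixedLits.2 ⟨hij, hfix⟩) fun ⟨k, d⟩ hk =>
      mem_fixedLits_of_fixed hbi hbj hij hfix hk (by rintro rfl; exact hno d hk)
  have := card_le_card hsub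
  rw [card_insert_of_notMem (by simp [mem_fixedLits])] at this
  omega

end fixedLits

lemma fixed_of_not_relevantAt_update {b : Fin n → Option Bool} {i j : Fin n} {v : Bool}
    (hbi : b i = none) (h : ¬RelevantAt f (update b i (some v)) j) :
    ∀ x, TExtends x b → SensitiveAt f x j → x i = !v := by
  intro x hxb hxj
  by_contra hne
  exact h ⟨x, (tExtends_update_some hbi v).2 ⟨hxb, by simpa using hne⟩, hxj⟩

lemma exists_relevantAt_update {b : Fin n → Option Bool} (hne : (freeRelevant f b).Nonempty) :
    ∃ i ∈ freeRelevant f b, ∃ v : Bool,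
      ∀ j ∈ freeRelevant f b, j ≠ i → RelevantAt f (update b i (some v)) j := by
  -- Take `i` with the most fixed literals. If setting `i` to `false` kills `j` and setting it
  -- to `true` kills `j'`, maximality forces a `j'`-literal into `fixedLits i`; transporting it
  -- to `j`, and then `(i, false)` from `j'` to `j`, fixes `x i` to both values on `j`-witnesses.
  obtain ⟨i, hi, hmax⟩ := exists_max_image _ (fun j => #(fixedLits f b j)) hne
  refine ⟨i, hi, ?_⟩
  by_contra! hkill
  obtain ⟨j, hj, hji, hj_true⟩ := hkill false
  obtain ⟨j', hj', hj'i, hj'_false⟩ := hkill true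
  have hbi := (mem_freeRelevant.1 hi).1
  obtain ⟨hbj, x, hxb, hxj⟩ := mem_freeRelevant.1 hj
  have hbj' := (mem_freeRelevant.1 hj').1
  replace hj_true := fixed_of_not_relevantAt_update hbi hj_true
  replace hj'_false := fixed_of_not_relevantAt_update hbi hj'_false
  have hjj' : j ≠ j' := by rintro rfl; simpa [hj_true x hxb hxj] using hj'_false x hxb hxj
  obtain ⟨d, hd⟩ :=
    exists_mem_fixedLits_of_card_le hbi hbj' hj'i.symm hj'_false (hmax j' hj')
  have hj'd := (mem_fixedLits.1 (mem_fixedLits_of_fixed hbi hbj hji.symm hj_true hd hjj'.symm)).2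
  have hif := mem_fixedLits_of_fixed hbj' hbj hjj'.symm hj'd
    (mem_fixedLits.2 ⟨hj'i.symm, hj'_false⟩) hji.symm
  simpa [hj_true x hxb hxj] using (mem_fixedLits.1 hif).2 x hxb hxj

lemma freeRelevant_update_subset {b : Fin n → Option Bool} {i : Fin n} (hbi : b i = none)
    (v : Bool) : freeRelevant f (update b i (some v)) ⊆ (freeRelevant f b).erase i := by
  intro j hj
  obtain ⟨hbj, x, hxb, hxj⟩ := mem_freeRelevant.1 hj
  have hji : j ≠ i := by rintro rfl; simp at hbj
  rw [update_of_ne hji] at hbj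
  have hxb' := ((tExtends_update_some hbi v).1 hxb).1
  exact mem_erase.2 ⟨hji, mem_freeRelevant.2 ⟨hbj, x, hxb', hxj⟩⟩

lemma exists_card_freeRelevant_update {b : Fin n → Option Bool}
    (hne : (freeRelevant f b).Nonempty) :
    ∃ i ∈ freeRelevant f b, ∃ v : Bool,
      #(freeRelevant f (update b i (some v))) + 1 = #(freeRelevant f b) := by
  obtain ⟨i, hi, v, hrel⟩ := exists_relevantAt_update hne
  have hbi := (mem_freeRelevant.1 hi).1
  refine ⟨i, hi, v, ?_⟩
  rw [(freeRelevant_update_subset hbi v).antisymm fun j hj => ?_, card_erase_add_one hi]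
  obtain ⟨hji, hj⟩ := mem_erase.1 hj
  exact mem_freeRelevant.2 ⟨by rw [update_of_ne hji]; exact (mem_freeRelevant.1 hj).1,
    hrel j hj hji⟩

lemma GoalFn.add_card_freeRelevant_le {g : (Fin n → Option Bool) → ℕ} {Q : ℕ}
    (hg : GoalFn f g Q) (b : Fin n → Option Bool) : g b + #(freeRelevant f b) ≤ Q := by
  induction hk : #(freeRelevant f b) generalizing b with
  | zero => simpa using hg.le_goal b
  | succ k ih =>
    obtain ⟨i, hi, v, hcard⟩ :=
      exists_card_freeRelevant_update (f := f) (b := b) (card_pos.1 (by omega))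
    have hlt := hg.lt_update (mem_freeRelevant.1 hi).1 (mem_freeRelevant.1 hi).2 v
    have := ih (update b i (some v)) (by omega)
    omega

end

/-- if `f` depends on exactly `n'` of its variables, then `Γ(f) ≥ n'`. -/
theorem stmt5 {n : ℕ} (f : (Fin n → Bool) → Bool) (n' : ℕ)
    (h : {i : Fin n | DependsOnVar f i}.ncard = n') :
    n' ≤ gamma f := by
  obtain ⟨g, hg⟩ : ∃ g, GoalFn f g (gamma f) :=
    Nat.sInf_mem (s := {Q | ∃ g, GoalFn f g Q}) ⟨_, pairGoal f, pairGoal_goalFn f⟩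
  have hdep : {i | DependsOnVar f i} = ↑(freeRelevant f fun _ => none) := by
    ext i
    simp [freeRelevant, RelevantAt, SensitiveAt, DependsOnVar, TExtends]
  have := hg.add_card_freeRelevant_le fun _ => none
  rw [← h, hdep, Set.ncard_coe_finset]
  omega
end
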